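/- Let n be a positive integer, and let Q⁻(n) = {d : d ≼₁ n, d ≤ √n} and Q⁺(n) = {d : d ≼₁ n, ⌊n/d⌋ ≤ √n}. Then: (a) if d, e ∈ Q⁺(n) with d ≼₁ e, then ⌊n/e⌋ ≼₁ ⌊n/d⌋; (b) if d, e ∈ Q⁻(n) with d ≼₁ e and d ≠ e, then ⌊n/d⌋ is not a floor quotient of ⌊n/e⌋; that is, the map d ↦ ⌊n/d⌋ is order-reversing from Q⁺(n) to Q⁻(n) and never-order-preserving from Q⁻(n) to Q⁺(n). -/

import Mathlib

/-!
A positive floor quotient `e` of `n` is recovered as `e = ⌊n/q⌋` from `q = ⌊n/e⌋`, so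
`n < q (e + 1)`. For (a), write `d = ⌊e/j⌋`; then `d j ≤ e < d j + j`, and `d` being large
gives `q j ≤ ⌊n/d⌋ ≤ d`, which squeezes `⌊n/(d j)⌋` to `q`. For (b), `x ↦ ⌊n/x⌋` drops by at
least one at each step below `√n`, so `⌊n/e⌋ < ⌊n/d⌋` while every floor quotient of `⌊n/e⌋`
is at most `⌊n/e⌋`.
-/

/-- `d` is a floor quotient of `n`: `d = ⌊n/k⌋` for some positive integer `k`. -/
def FloorQuotient (d n : ℕ) : Prop := ∃ k : ℕ, 0 < k ∧ d = n / k

namespace Nat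

theorem div_le_of_div_mul_div_le {n d : ℕ} (h : n / d * (n / d) ≤ n) : n / d ≤ d := by
  rcases Nat.eq_zero_or_pos d with rfl | hd
  · simp
  by_contra! hlt
  have := Nat.lt_div_mul_add (a := n) hd
  nlinarith

theorem div_lt_div_of_lt_of_mul_self_le {n d e : ℕ} (hd : 0 < d) (hde : d < e)
    (he : e * e ≤ n) : n / e < n / d := by
  have hq : e ≤ n / e := (Nat.le_div_iff_mul_le (hd.trans hde)).mpr he
  have hqe : n / e * e ≤ n := Nat.div_mul_le_self n e
  rw [← Nat.add_one_le_iff, Nat.le_div_iff_mul_le hd]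
  obtain ⟨e', rfl⟩ : ∃ e', e = e' + 1 := ⟨e - 1, by omega⟩
  calc (n / (e' + 1) + 1) * d ≤ (n / (e' + 1) + 1) * e' := Nat.mul_le_mul_left _ (by omega)
    _ ≤ n / (e' + 1) * (e' + 1) := by nlinarith
    _ ≤ n := hqe

end Nat

namespace FloorQuotient

variable {d e n : ℕ}

theorem le (h : FloorQuotient d n) : d ≤ n := by
  obtain ⟨k, -, rfl⟩ := h
  exact Nat.div_le_self n k

theorem div_div_self (h : FloorQuotient d n) (hd : 0 < d) : n / (n / d) = d := by
  have hq : 0 < n / d := Nat.div_pos h.le hd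
  obtain ⟨k, hk, hdk⟩ := h
  have hkd : k ≤ n / d := by
    rw [Nat.le_div_iff_mul_le hd, hdk, Nat.mul_comm]
    exact Nat.div_mul_le_self n k
  refine le_antisymm ?_ ((Nat.le_div_iff_mul_le hq).mpr ?_)
  · exact (Nat.div_le_div_left hkd hk).trans_eq hdk.symm
  · rw [Nat.mul_comm]
    exact Nat.div_mul_le_self n d

theorem lt_div_mul_add_one (h : FloorQuotient e n) (he : 0 < e) : n < n / e * (e + 1) := by
  have := Nat.lt_mul_div_succ n (Nat.div_pos h.le he)
  rwa [h.div_div_self he] at this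

theorem div_div_of_div_le_sqrt (hd : 0 < d) (hen : FloorQuotient e n)
    (hdn : n / d ≤ Nat.sqrt n) (hde : FloorQuotient d e) : FloorQuotient (n / e) (n / d) := by
  obtain ⟨j, hj, hdj⟩ := hde
  set q := n / e
  have he : 0 < e := hd.trans_le (hdj ▸ Nat.div_le_self e j)
  have hdje : d * j ≤ e := hdj ▸ Nat.div_mul_le_self e j
  have hedj : e < d * j + j := hdj ▸ Nat.lt_div_mul_add hj
  have hqe : q * e ≤ n := Nat.div_mul_le_self n e
  have hqj : q * j ≤ n / d := by
    rw [Nat.le_div_iff_mul_le hd]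
    nlinarith
  have hdsmall : n / d ≤ d := Nat.div_le_of_div_mul_div_le (Nat.le_sqrt.mp hdn)
  have hn : n < q * (e + 1) := hen.lt_div_mul_add_one he
  refine ⟨j, hj, ?_⟩
  rw [Nat.div_div_eq_div_mul]
  refine (Nat.div_eq_of_lt_le ?_ ?_).symm
  · nlinarith
  · nlinarith

end FloorQuotient

theorem involution_order_reversing_on_large_never_preserving_on_small_general
    (n : ℕ) :
    -- (a) order-reversing from Q⁺(n) to Q⁻(n)
    (∀ d e : ℕ, 0 < d → FloorQuotient d n → n / d ≤ Nat.sqrt n →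
      0 < e → FloorQuotient e n → n / e ≤ Nat.sqrt n →
      FloorQuotient d e → FloorQuotient (n / e) (n / d)) ∧
    -- (b) never-order-preserving from Q⁻(n) to Q⁺(n)
    (∀ d e : ℕ, 0 < d → FloorQuotient d n → d ≤ Nat.sqrt n →
      0 < e → FloorQuotient e n → e ≤ Nat.sqrt n →
      FloorQuotient d e → d ≠ e → ¬ FloorQuotient (n / d) (n / e)) := by
  refine ⟨fun d e hd _ hdn _ hen _ hde => hen.div_div_of_div_le_sqrt hd hdn hde, ?_⟩
  rintro d e hd - - - - he hde hne ⟨k, -, hk⟩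
  have hlt : n / e < n / d :=
    Nat.div_lt_div_of_lt_of_mul_self_le hd (hde.le.lt_of_ne hne) (Nat.le_sqrt.mp he)
  exact (hk ▸ hlt).not_ge (Nat.div_le_self _ k)

theorem involution_order_reversing_on_large_never_preserving_on_small
    (n : ℕ) (hn : 0 < n) :
    -- (a) order-reversing from Q⁺(n) to Q⁻(n)
    (∀ d e : ℕ, 0 < d → FloorQuotient d n → n / d ≤ Nat.sqrt n →
      0 < e → FloorQuotient e n → n / e ≤ Nat.sqrt n →
      FloorQuotient d e → FloorQuotient (n / e) (n / d)) ∧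
    -- (b) never-order-preserving from Q⁻(n) to Q⁺(n)
    (∀ d e : ℕ, 0 < d → FloorQuotient d n → d ≤ Nat.sqrt n →
      0 < e → FloorQuotient e n → e ≤ Nat.sqrt n →
      FloorQuotient d e → d ≠ e → ¬ FloorQuotient (n / d) (n / e)) :=
  involution_order_reversing_on_large_never_preserving_on_small_general n
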